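/- arXiv:2103.09411 — 2 statements merged into one kernel-verified Lean document; each statement's English description precedes it below -/
import Mathlib

section
/- Let U and Û be q×r real matrices with orthonormal columns, and let U diag(φ_1,…,φ_r) Ûᵀ (with φ_1 ≥ ⋯ ≥ φ_r ≥ 0) be such that U Uᵀ = P, Û Ûᵀ = P̂ are the associated projections and each pair (U e_j, Û e_j) spans an invariant subspace of P − P̂ with (U e_j)ᵀ(Û e_j) = φ_j. Then ‖U − Û‖_op² = 2(1 − φ_r) ≤ 2(1 − √(1 − ‖P − P̂‖_op²)), provided ‖P − P̂‖_op < 1. -/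
/-! `P P̂ = U diag φ Ûᵀ` forces `Uᵀ Û = diag φ`. Hence `U - Û` and `(P - P̂) Û = U diag φ - Û`
have diagonal Gram matrices, `diag (2 (1 - φ))` and `diag (1 - φ²)`, and the squared operator
norm of a matrix with diagonal Gram matrix is its largest diagonal entry. The smallest `φ_r` thus
gives `‖U - Û‖² = 2 (1 - φ_r)`, and `1 - φ_r² = ‖(P - P̂) Û‖² ≤ ‖P - P̂‖²` because `‖Û‖ = 1`. -/

open Matrix
open scoped Matrix.Norms.L2Operator

namespace Matrix

section Gram

variable {m n R : Type*} [Fintype m] [DecidableEq n] [CommRing R] {U V : Matrix m n R}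

theorem transpose_mul_eq_of_mul_transpose_mul_eq [Fintype n] (hU : Uᵀ * U = 1)
    (hV : Vᵀ * V = 1) {D : Matrix n n R} (h : U * Uᵀ * (V * Vᵀ) = U * D * Vᵀ) : Uᵀ * V = D :=
  calc Uᵀ * V = Uᵀ * U * (Uᵀ * V) * (Vᵀ * V) := by rw [hU, hV, one_mul, mul_one]
    _ = Uᵀ * (U * Uᵀ * (V * Vᵀ)) * V := by simp only [Matrix.mul_assoc]
    _ = Uᵀ * U * D * (Vᵀ * V) := by rw [h]; simp only [Matrix.mul_assoc]
    _ = D := by rw [hU, hV, one_mul, mul_one]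

theorem transpose_mul_self_sub_of_transpose_mul_eq_diagonal (hU : Uᵀ * U = 1)
    (hV : Vᵀ * V = 1) {φ : n → R} (hUV : Uᵀ * V = diagonal φ) :
    (U - V)ᵀ * (U - V) = diagonal fun j => 2 * (1 - φ j) := by
  have hVU : Vᵀ * U = diagonal φ := by
    rw [← transpose_transpose U, ← transpose_mul, hUV, diagonal_transpose]
  rw [transpose_sub, Matrix.sub_mul, Matrix.mul_sub, Matrix.mul_sub, hU, hV, hUV, hVU,
    ← diagonal_one, diagonal_sub, diagonal_sub, diagonal_sub]
  congr 1; funext j; ring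

theorem transpose_mul_self_mul_diagonal_sub_of_transpose_mul_eq_diagonal [Fintype n]
    (hU : Uᵀ * U = 1) (hV : Vᵀ * V = 1) {φ : n → R} (hUV : Uᵀ * V = diagonal φ) :
    (U * diagonal φ - V)ᵀ * (U * diagonal φ - V) = diagonal fun j => 1 - φ j ^ 2 := by
  have hVU : Vᵀ * U = diagonal φ := by
    rw [← transpose_transpose U, ← transpose_mul, hUV, diagonal_transpose]
  rw [transpose_sub, transpose_mul, diagonal_transpose, Matrix.sub_mul, Matrix.mul_sub,
    Matrix.mul_sub, Matrix.mul_assoc, ← Matrix.mul_assoc Uᵀ, hU, Matrix.one_mul, Matrix.mul_assoc,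
    hUV, hV, ← Matrix.mul_assoc, hVU, diagonal_mul_diagonal, ← diagonal_one, diagonal_sub,
    diagonal_sub, diagonal_sub]
  congr 1; funext j; ring

end Gram

theorem l2_opNorm_sq_eq_of_transpose_mul_self_eq_diagonal {m n : Type*} [Fintype m] [Fintype n]
    [DecidableEq n] {A : Matrix m n ℝ} {d : n → ℝ} (hA : Aᵀ * A = diagonal d) {j₀ : n}
    (hj₀ : ∀ j, d j ≤ d j₀) : ‖A‖ ^ 2 = d j₀ := by
  have hd : ∀ j, 0 ≤ d j := fun j => by
    simpa [hA] using (posSemidef_conjTranspose_mul_self A).diag_nonneg (i := j)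
  rw [sq, ← l2_opNorm_conjTranspose_mul_self, conjTranspose_eq_transpose_of_trivial, hA,
    l2_opNorm_diagonal]
  refine le_antisymm ((pi_norm_le_iff_of_nonneg (hd j₀)).2 fun j => ?_) ?_
  · rw [Real.norm_of_nonneg (hd j)]; exact hj₀ j
  · simpa [Real.norm_of_nonneg (hd j₀)] using norm_le_pi_norm d j₀

end Matrix

/-- If `U`, `Û` have orthonormal columns, `P = UUᵀ`, `P̂ = ÛÛᵀ`, and
`U diag(φ₁,…,φ_r) Ûᵀ` (with `φ₁ ≥ ⋯ ≥ φ_r ≥ 0`) gives `P P̂` while each pair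
`(U e_j, Û e_j)` spans an invariant subspace of `P − P̂` with `(Ue_j)ᵀ(Ûe_j) = φ_j`,
then `‖U − Û‖_op² = 2(1 − φ_r) ≤ 2(1 − √(1 − ‖P − P̂‖_op²))` provided `‖P − P̂‖_op < 1`. -/
theorem opNorm_sq_diff_orthonormal_frames (q r : ℕ) (hr : 0 < r)
    (U Uhat : Matrix (Fin q) (Fin r) ℝ)
    (hU : Uᵀ * U = 1) (hUhat : Uhatᵀ * Uhat = 1)
    (φ : Fin r → ℝ) (hφa : Antitone φ) (hφ0 : ∀ j, 0 ≤ φ j)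
    (P Phat : Matrix (Fin q) (Fin q) ℝ)
    (hP : P = U * Uᵀ) (hPhat : Phat = Uhat * Uhatᵀ)
    (hsvd : P * Phat = U * Matrix.diagonal φ * Uhatᵀ) :
    ‖U - Uhat‖ ^ 2 = 2 * (1 - φ ⟨r - 1, by omega⟩) ∧
    ‖U - Uhat‖ ^ 2 ≤ 2 * (1 - Real.sqrt (1 - ‖P - Phat‖ ^ 2)) := by
  set jr : Fin r := ⟨r - 1, by omega⟩
  have hmin : ∀ j, φ jr ≤ φ j := fun j => hφa (Fin.le_def.2 (by simp only [jr]; omega))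
  have hD : Uᵀ * Uhat = diagonal φ :=
    transpose_mul_eq_of_mul_transpose_mul_eq hU hUhat (hP ▸ hPhat ▸ hsvd)
  have hnorm : ‖U - Uhat‖ ^ 2 = 2 * (1 - φ jr) :=
    l2_opNorm_sq_eq_of_transpose_mul_self_eq_diagonal
      (transpose_mul_self_sub_of_transpose_mul_eq_diagonal hU hUhat hD)
      fun j => by linarith [hmin j]
  have hUhat_norm : ‖Uhat‖ ^ 2 = 1 :=
    l2_opNorm_sq_eq_of_transpose_mul_self_eq_diagonal (hUhat.trans diagonal_one.symm)
      (j₀ := jr) fun _ => le_rfl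
  have hPU : (P - Phat) * Uhat = U * diagonal φ - Uhat := by
    rw [hP, hPhat, Matrix.sub_mul, Matrix.mul_assoc, hD, Matrix.mul_assoc, hUhat, Matrix.mul_one]
  have hlower : 1 - φ jr ^ 2 ≤ ‖P - Phat‖ ^ 2 :=
    calc 1 - φ jr ^ 2 = ‖(P - Phat) * Uhat‖ ^ 2 := by
          rw [hPU, l2_opNorm_sq_eq_of_transpose_mul_self_eq_diagonal
            (transpose_mul_self_mul_diagonal_sub_of_transpose_mul_eq_diagonal hU hUhat hD)
            fun j => by nlinarith [hmin j, hφ0 jr]]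
      _ ≤ (‖P - Phat‖ * ‖Uhat‖) ^ 2 := by gcongr; exact l2_opNorm_mul _ _
      _ = ‖P - Phat‖ ^ 2 := by rw [mul_pow, hUhat_norm, mul_one]
  have hsqrt : Real.sqrt (1 - ‖P - Phat‖ ^ 2) ≤ φ jr := Real.sqrt_le_iff.2 ⟨hφ0 jr, by linarith⟩
  exact ⟨hnorm, by linarith⟩
end

section
/- Let α(k) be the strong mixing coefficients of a process (X_t), satisfying α(k) ≤ exp(−c₀ k^{r₁}) with c₀ > 0 and 0 < r₁ ≤ 1. Then for a fixed integer τ₀ ≥ 0, the mixing coefficients α'(k) of the quadratic process (X_{t+τ} ⊗ X_t : 0 ≤ τ ≤ τ₀) satisfy α'(k) ≤ exp(−c₀(1 + c₀^{1/r₁} τ₀)^{−r₁} k^{r₁}) for all k ≥ 1. -/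
open MeasureTheory

/-- Matrices carry the product measurable structure. -/
instance matrixMeasurableSpace {m n : Type*} : MeasurableSpace (Matrix m n ℝ) :=
  MeasurableSpace.pi

/-- The strong mixing coefficient at lag `k` between the σ-algebras `past t` and
`future (t + k)`: `α(k) = sup_t sup { |P(A∩B) − P(A)P(B)| }`. -/
noncomputable def alphaMix {Ω : Type*} [MeasurableSpace Ω] (μ : Measure Ω)
    (past future : ℤ → MeasurableSpace Ω) (k : ℕ) : ℝ :=
  ⨆ t : ℤ, sSup {x : ℝ | ∃ A B : Set Ω, MeasurableSet[past t] A ∧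
    MeasurableSet[future (t + (k : ℤ))] B ∧
    x = |(μ (A ∩ B)).toReal - (μ A).toReal * (μ B).toReal|}

lemma cov_quarter {Ω : Type*} [MeasurableSpace Ω] (μ : Measure Ω) [IsProbabilityMeasure μ]
    {A B : Set Ω} (hB : MeasurableSet B) :
    |(μ (A ∩ B)).toReal - (μ A).toReal * (μ B).toReal| ≤ 4⁻¹ := by
  set a := (μ A).toReal with ha
  set b := (μ B).toReal with hb
  set x := (μ (A ∩ B)).toReal with hx
  set w := (μ (A ∪ B)).toReal with hw
  have hsum : w + x = a + b := by
    have h := measure_union_add_inter (μ := μ) (t := B) A hB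
    have h2 := congrArg ENNReal.toReal h
    rwa [ENNReal.toReal_add (measure_ne_top _ _) (measure_ne_top _ _),
      ENNReal.toReal_add (measure_ne_top _ _) (measure_ne_top _ _)] at h2
  have hxa : x ≤ a := ENNReal.toReal_mono (measure_ne_top _ _)
    (measure_mono Set.inter_subset_left)
  have hxb : x ≤ b := ENNReal.toReal_mono (measure_ne_top _ _)
    (measure_mono Set.inter_subset_right)
  have hx0 : 0 ≤ x := ENNReal.toReal_nonneg
  have ha0 : 0 ≤ a := ENNReal.toReal_nonneg
  have hb0 : 0 ≤ b := ENNReal.toReal_nonneg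
  have hw1 : w ≤ 1 := by
    simpa using ENNReal.toReal_mono ENNReal.one_ne_top (prob_le_one (μ := μ) (s := A ∪ B))
  rw [abs_le]
  constructor
  · -- a*b - x ≤ 1/4
    rcases le_or_gt (a + b) 1 with hab | hab
    · nlinarith [sq_nonneg (a - b), sq_nonneg (a + b)]
    · nlinarith [sq_nonneg (a - b), sq_nonneg (a + b - 2)]
  · -- x - a*b ≤ 1/4
    nlinarith [mul_nonneg (sub_nonneg.2 hxa) (sub_nonneg.2 hxb),
      mul_nonneg hx0 (by linarith : (0:ℝ) ≤ a + b - 2 * x), sq_nonneg (2 * x - 1)]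

/-- If the process `(X_t)` is strongly mixing with `α(k) ≤ exp(−c₀ k^{r₁})`,
`c₀ > 0`, `0 < r₁ ≤ 1`, then for fixed `τ₀ ≥ 0` the quadratic process
`(X_{t+τ} ⊗ X_t : 0 ≤ τ ≤ τ₀)` has mixing coefficients bounded by
`α'(k) ≤ exp(−c₀ (1 + c₀^{1/r₁} τ₀)^{−r₁} k^{r₁})` for all `k ≥ 1`. -/
theorem quadratic_process_mixing {Ω : Type*} [MeasurableSpace Ω]
    (μ : Measure Ω) [IsProbabilityMeasure μ]
    (p q : ℕ) (X : ℤ → Ω → Matrix (Fin p) (Fin q) ℝ)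
    (hmeas : ∀ t, Measurable (X t))
    (c₀ r₁ : ℝ) (hc₀ : 0 < c₀) (hr₁0 : 0 < r₁) (hr₁1 : r₁ ≤ 1)
    (τ₀ : ℕ)
    (pastX futX pastZ futZ : ℤ → MeasurableSpace Ω)
    (hpastX : pastX = fun t => ⨆ s : ℤ, ⨆ _ : s ≤ t,
      MeasurableSpace.comap (X s) inferInstance)
    (hfutX : futX = fun t => ⨆ s : ℤ, ⨆ _ : t ≤ s,
      MeasurableSpace.comap (X s) inferInstance)
    (hpastZ : pastZ = fun t => ⨆ s : ℤ, ⨆ _ : s ≤ t, ⨆ τ : ℕ, ⨆ _ : τ ≤ τ₀,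
      MeasurableSpace.comap
        (fun ω => Matrix.kroneckerMap (· * ·) (X (s + (τ : ℤ)) ω) (X s ω)) inferInstance)
    (hfutZ : futZ = fun t => ⨆ s : ℤ, ⨆ _ : t ≤ s, ⨆ τ : ℕ, ⨆ _ : τ ≤ τ₀,
      MeasurableSpace.comap
        (fun ω => Matrix.kroneckerMap (· * ·) (X (s + (τ : ℤ)) ω) (X s ω)) inferInstance)
    (hα : ∀ k : ℕ, 1 ≤ k → alphaMix μ pastX futX k ≤ Real.exp (-c₀ * (k : ℝ) ^ r₁)) :
    ∀ k : ℕ, 1 ≤ k → alphaMix μ pastZ futZ k ≤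
      Real.exp (-(c₀ * (1 + c₀ ^ (1 / r₁) * (τ₀ : ℝ)) ^ (-r₁)) * (k : ℝ) ^ r₁) := by
  intro k hk
  -- ambient measurability
  have hfutX_le : ∀ t, futX t ≤ ‹MeasurableSpace Ω› := by
    intro t; rw [hfutX]
    exact iSup_le fun s => iSup_le fun _ => measurable_iff_comap_le.mp (hmeas s)
  have hXpast : ∀ (T s : ℤ), s ≤ T → Measurable[pastX T] (X s) := by
    intro T s hs
    rw [measurable_iff_comap_le, hpastX]
    exact le_iSup_of_le s (le_iSup_of_le hs le_rfl)
  have hXfut : ∀ (T s : ℤ), T ≤ s → Measurable[futX T] (X s) := by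
    intro T s hs
    rw [measurable_iff_comap_le, hfutX]
    exact le_iSup_of_le s (le_iSup_of_le hs le_rfl)
  have hentry : ∀ (m : MeasurableSpace Ω) (a : ℤ), Measurable[m] (X a) →
      ∀ (i : Fin p) (j : Fin q), Measurable[m] (fun ω => X a ω i j) := by
    intro m a hma i j
    exact (measurable_pi_apply j).comp ((measurable_pi_apply i).comp hma)
  have hkron : ∀ (m : MeasurableSpace Ω) (a b : ℤ), Measurable[m] (X a) → Measurable[m] (X b) →
      Measurable[m] (fun ω => Matrix.kroneckerMap (· * ·) (X a ω) (X b ω)) := by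
    intro m a b hma hmb
    apply measurable_pi_lambda
    intro i
    apply measurable_pi_lambda
    intro j
    simp only [Matrix.kroneckerMap_apply]
    exact (hentry m a hma i.1 j.1).mul (hentry m b hmb i.2 j.2)
  have hZpast : ∀ t, pastZ t ≤ pastX (t + (τ₀ : ℤ)) := by
    intro t; rw [hpastZ]
    refine iSup_le fun s => iSup_le fun hs => iSup_le fun τ => iSup_le fun hτ => ?_
    rw [← measurable_iff_comap_le]
    exact hkron _ _ _ (hXpast _ _ (by omega)) (hXpast _ _ (by omega))
  have hZfut : ∀ t, futZ t ≤ futX t := by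
    intro t; rw [hfutZ]
    refine iSup_le fun s => iSup_le fun hs => iSup_le fun τ => iSup_le fun hτ => ?_
    rw [← measurable_iff_comap_le]
    exact hkron _ _ _ (hXfut _ _ (by omega)) (hXfut _ _ (by omega))
  -- real-number setup
  set u := c₀ ^ (1 / r₁) with hu
  have hu0 : 0 < u := Real.rpow_pos_of_pos hc₀ _
  have hcu : u ^ r₁ = c₀ := by
    rw [hu, ← Real.rpow_mul hc₀.le, one_div_mul_cancel hr₁0.ne', Real.rpow_one]
  set D := 1 + u * (τ₀ : ℝ) with hD
  have hD0 : 0 < D := by positivity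
  have hCeq : ∀ y : ℝ, 0 ≤ y → (c₀ * D ^ (-r₁)) * y ^ r₁ = (u * y / D) ^ r₁ := by
    intro y hy
    rw [Real.div_rpow (by positivity) hD0.le, Real.mul_rpow hu0.le hy, hcu,
      Real.rpow_neg hD0.le]
    ring
  by_cases hcase : u * (k : ℝ) ≤ D
  · -- small k : use the universal bound 1/4 ≤ exp(−1)
    have hCk : (c₀ * D ^ (-r₁)) * (k : ℝ) ^ r₁ ≤ 1 := by
      rw [hCeq k (Nat.cast_nonneg k)]
      exact Real.rpow_le_one (by positivity) ((div_le_one hD0).mpr hcase) hr₁0.le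
    have hexp : (4 : ℝ)⁻¹ ≤ Real.exp (-(c₀ * D ^ (-r₁)) * (k : ℝ) ^ r₁) := by
      have h1 : Real.exp (-(1 : ℝ)) ≤ Real.exp (-(c₀ * D ^ (-r₁)) * (k : ℝ) ^ r₁) :=
        Real.exp_le_exp.mpr (by linarith)
      refine le_trans ?_ h1
      rw [Real.exp_neg]
      have h4 : Real.exp 1 ≤ 4 := by
        have := Real.exp_one_lt_d9
        linarith
      exact inv_anti₀ (Real.exp_pos 1) h4
    refine Real.iSup_le (fun t => ?_) (Real.exp_pos _).le
    refine Real.sSup_le ?_ (Real.exp_pos _).le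
    rintro x ⟨A, B, hA, hB, rfl⟩
    have hBm : MeasurableSet B := hfutX_le _ _ (hZfut _ _ hB)
    exact le_trans (cov_quarter μ hBm) hexp
  · -- large k : compare with the X-mixing coefficient at lag k − τ₀
    push_neg at hcase
    have hkτ : τ₀ < k := by
      have h1 : u * (τ₀ : ℝ) < u * (k : ℝ) := by nlinarith
      have h2 : (τ₀ : ℝ) < (k : ℝ) := lt_of_mul_lt_mul_left h1 hu0.le
      exact_mod_cast h2
    set k' := k - τ₀ with hk'
    have hk'cast : (k' : ℝ) = (k : ℝ) - (τ₀ : ℝ) := by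
      have : (k' : ℤ) = (k : ℤ) - (τ₀ : ℤ) := by omega
      exact_mod_cast congrArg (fun z : ℤ => (z : ℝ)) this
    have hk'1 : 1 ≤ k' := by omega
    have huk' : 1 ≤ u * ((k : ℝ) - (τ₀ : ℝ)) := by nlinarith
    have hexp_le : (c₀ * D ^ (-r₁)) * (k : ℝ) ^ r₁ ≤ c₀ * (k' : ℝ) ^ r₁ := by
      rw [hCeq k (Nat.cast_nonneg k), ← hcu, ← Real.mul_rpow hu0.le (Nat.cast_nonneg k')]
      refine Real.rpow_le_rpow (by positivity) ?_ hr₁0.le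
      rw [div_le_iff₀ hD0, hD, hk'cast]
      nlinarith [mul_nonneg (mul_nonneg hu0.le (Nat.cast_nonneg τ₀ : (0:ℝ) ≤ (τ₀ : ℝ)))
        (by linarith : (0:ℝ) ≤ u * ((k : ℝ) - (τ₀ : ℝ)) - 1)]
    have hmix := hα k' hk'1
    -- the per-t set for the X process at lag k'
    set S : ℤ → Set ℝ := fun t' => {x : ℝ | ∃ A B : Set Ω, MeasurableSet[pastX t'] A ∧
      MeasurableSet[futX (t' + (k' : ℤ))] B ∧
      x = |(μ (A ∩ B)).toReal - (μ A).toReal * (μ B).toReal|} with hSdef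
    have hSalpha : alphaMix μ pastX futX k' = ⨆ t' : ℤ, sSup (S t') := rfl
    have hSle : ∀ t', ∀ x ∈ S t', x ≤ 4⁻¹ := by
      rintro t' x ⟨A, B, hA, hB, rfl⟩
      exact cov_quarter μ (hfutX_le _ _ hB)
    refine Real.iSup_le (fun t => ?_) (Real.exp_pos _).le
    refine Real.sSup_le ?_ (Real.exp_pos _).le
    rintro x ⟨A, B, hA, hB, rfl⟩
    have hA' : MeasurableSet[pastX (t + (τ₀ : ℤ))] A := hZpast t _ hA
    have hB' : MeasurableSet[futX ((t + (τ₀ : ℤ)) + (k' : ℤ))] B := by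
      have ht : (t + (τ₀ : ℤ)) + (k' : ℤ) = t + (k : ℤ) := by omega
      rw [ht]
      exact hZfut _ _ hB
    have hmem : |(μ (A ∩ B)).toReal - (μ A).toReal * (μ B).toReal| ∈ S (t + (τ₀ : ℤ)) :=
      ⟨A, B, hA', hB', rfl⟩
    have h1 : |(μ (A ∩ B)).toReal - (μ A).toReal * (μ B).toReal| ≤ sSup (S (t + (τ₀ : ℤ))) :=
      le_csSup ⟨4⁻¹, fun y hy => hSle _ y hy⟩ hmem
    have h2 : sSup (S (t + (τ₀ : ℤ))) ≤ ⨆ t' : ℤ, sSup (S t') := by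
      refine le_ciSup (f := fun t' : ℤ => sSup (S t')) ⟨(4:ℝ)⁻¹, ?_⟩ (t + (τ₀ : ℤ))
      rintro _ ⟨t', rfl⟩
      exact Real.sSup_le (hSle t') (by norm_num)
    have h3 : Real.exp (-c₀ * (k' : ℝ) ^ r₁) ≤
        Real.exp (-(c₀ * D ^ (-r₁)) * (k : ℝ) ^ r₁) :=
      Real.exp_le_exp.mpr (by linarith)
    calc |(μ (A ∩ B)).toReal - (μ A).toReal * (μ B).toReal|
        ≤ ⨆ t' : ℤ, sSup (S t') := le_trans h1 h2
      _ ≤ Real.exp (-c₀ * (k' : ℝ) ^ r₁) := by rw [← hSalpha]; exact hmix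
      _ ≤ _ := h3
end
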